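/- arXiv:1208.5170 — 2 statements merged into one kernel-verified Lean document; each statement's English description precedes it below -/
import Mathlib

section
/- The double sum $\sum_{k=1}^{\infty} \sum_{i=0}^{k} \frac{k!}{i!} k^{i-k-2}$ equals $-\int_0^{\infty} \log\bigl(1 - (1+x)e^{-x}\bigr)\,dx$, and in particular both sides are finite. -/
/-! With `t = (1 + x) e^{-x} ∈ [0, 1)`, expand `-log (1 - t) = ∑ t^k / k` and integrate termwise:
the terms are nonnegative, so the series dominates its own partial sums. By the binomial
theorem `t^k / k` is a combination of `x^j e^{-kx}`, whose integrals are `j! / k^{j+1}`; this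
gives the inner sum. The logarithm is integrable because `1 - t ≥ x² e^{-x} / 2` near `0`,
while `t ≤ 4/5` for `x ≥ 1` makes `|log (1 - t)| ≤ 5 t` there. -/

open MeasureTheory Real Set
open scoped Nat

lemma integrableOn_pow_mul_exp_neg_mul (n : ℕ) {m : ℝ} (hm : 0 < m) :
    IntegrableOn (fun x : ℝ => x ^ n * exp (-(m * x))) (Ioi 0) := by
  refine (integrableOn_rpow_mul_exp_neg_mul_rpow (s := n) (p := 1)
    (by linarith [n.cast_nonneg (α := ℝ)]) one_pos hm).congr_fun (fun x _ => ?_) measurableSet_Ioi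
  simp only [rpow_natCast, rpow_one, neg_mul]

lemma integral_pow_mul_exp_neg_mul (n : ℕ) {m : ℝ} (hm : 0 < m) :
    ∫ x in Ioi 0, x ^ n * exp (-(m * x)) = n ! / m ^ (n + 1) := by
  have h := integral_rpow_mul_exp_neg_mul_Ioi (a := n + 1) (by positivity) hm
  simp only [add_sub_cancel_right, rpow_natCast] at h
  rw [h, Gamma_nat_eq_factorial, ← Nat.cast_succ, rpow_natCast, one_div, inv_pow, div_eq_inv_mul]

lemma abs_log_one_sub_le {t c : ℝ} (ht : 0 ≤ t) (htc : t ≤ c) (hc : c < 1) :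
    |log (1 - t)| ≤ t / (1 - c) := by
  have h1t : 0 < 1 - t := by linarith
  rw [abs_of_nonpos (log_nonpos h1t.le (by linarith))]
  have hlog := one_sub_inv_le_log_of_pos h1t
  have hinv : 1 - (1 - t)⁻¹ = -(t / (1 - t)) := by field_simp; ring
  calc -log (1 - t) ≤ t / (1 - t) := by linarith
    _ ≤ t / (1 - c) := div_le_div_of_nonneg_left ht (by linarith) (by linarith)

lemma hasSum_integral_pow_div_of_integrable_log_one_sub {α : Type*} [MeasurableSpace α]
    {μ : Measure α} {f : α → ℝ} (hf : AEStronglyMeasurable f μ) (hf0 : ∀ᵐ x ∂μ, 0 ≤ f x)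
    (hf1 : ∀ᵐ x ∂μ, f x < 1) (hlog : Integrable (fun x => log (1 - f x)) μ) :
    HasSum (fun k : ℕ => ∫ x, f x ^ (k + 1) / (k + 1) ∂μ) (-∫ x, log (1 - f x) ∂μ) := by
  have hseries : ∀ᵐ x ∂μ, HasSum (fun k : ℕ => f x ^ (k + 1) / (k + 1)) (-log (1 - f x)) := by
    filter_upwards [hf0, hf1] with x h0 h1
    exact hasSum_pow_div_log_of_abs_lt_one (abs_lt.mpr ⟨by linarith, h1⟩)
  rw [← integral_neg]
  refine hasSum_integral_of_dominated_convergence _ (fun k => by fun_prop)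
    (fun k => ?_) (hseries.mono fun x hx => hx.summable) ?_ hseries
  · filter_upwards [hf0] with x h0
    rw [norm_of_nonneg (by positivity)]
  · exact hlog.neg.congr (hseries.mono fun x hx => hx.tsum_eq.symm)

lemma one_add_mul_exp_neg_pow_div (m : ℕ) (x : ℝ) :
    ((1 + x) * exp (-x)) ^ m / m =
      ∑ i ∈ Finset.range (m + 1), (m.choose i / m : ℝ) * (x ^ (m - i) * exp (-(m * x))) := by
  rw [mul_pow, add_pow, ← exp_nat_mul, Finset.sum_mul, Finset.sum_div]
  refine Finset.sum_congr rfl fun i _ => ?_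
  rw [mul_neg]
  ring

lemma choose_div_mul_factorial_div_pow {m i : ℕ} (hm : 0 < m) (hi : i ≤ m) :
    (m.choose i / m : ℝ) * ((m - i)! / (m : ℝ) ^ (m - i + 1)) =
      m ! / i ! * (m : ℝ) ^ ((i : ℤ) - m - 2) := by
  have hexp : (i : ℤ) - m - 2 = -((m - i + 2 : ℕ) : ℤ) := by push_cast [Nat.cast_sub hi]; ring
  rw [Nat.cast_choose ℝ hi, hexp, zpow_neg, zpow_natCast]
  have hmR : (m : ℝ) ≠ 0 := by positivity
  field_simp
  ring

lemma integral_one_add_mul_exp_neg_pow_div {m : ℕ} (hm : 0 < m) :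
    ∫ x in Ioi 0, ((1 + x) * exp (-x)) ^ m / m =
      ∑ i ∈ Finset.range (m + 1), (m ! / i ! : ℝ) * (m : ℝ) ^ ((i : ℤ) - m - 2) := by
  have hmR : (0 : ℝ) < m := by exact_mod_cast hm
  simp_rw [one_add_mul_exp_neg_pow_div m]
  rw [integral_finsetSum _ fun i _ => (integrableOn_pow_mul_exp_neg_mul _ hmR).const_mul _]
  refine Finset.sum_congr rfl fun i hi => ?_
  rw [integral_const_mul, integral_pow_mul_exp_neg_mul _ hmR,
    choose_div_mul_factorial_div_pow hm (Finset.mem_range_succ_iff.mp hi)]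

lemma one_add_mul_exp_neg_nonneg {x : ℝ} (hx : -1 ≤ x) : 0 ≤ (1 + x) * exp (-x) :=
  mul_nonneg (by linarith) (exp_pos _).le

lemma one_add_mul_exp_neg_lt_one {x : ℝ} (hx : x ≠ 0) : (1 + x) * exp (-x) < 1 := by
  rw [exp_neg, ← div_eq_mul_inv, div_lt_one (exp_pos x)]
  linarith [add_one_lt_exp hx]

lemma sq_div_two_mul_exp_neg_le {x : ℝ} (hx : 0 ≤ x) :
    x ^ 2 / 2 * exp (-x) ≤ 1 - (1 + x) * exp (-x) := by
  have h := quadratic_le_exp_of_nonneg hx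
  rw [exp_neg, ← div_eq_mul_inv, ← div_eq_mul_inv, one_sub_div (exp_pos x).ne',
    div_le_div_iff_of_pos_right (exp_pos x)]
  linarith

lemma one_add_mul_exp_neg_le {x : ℝ} (hx : 1 ≤ x) : (1 + x) * exp (-x) ≤ 4 / 5 := by
  have h := quadratic_le_exp_of_nonneg (zero_le_one.trans hx)
  rw [exp_neg, ← div_eq_mul_inv, div_le_iff₀ (exp_pos x)]
  nlinarith

lemma integrableOn_one_add_mul_exp_neg : IntegrableOn (fun x : ℝ => (1 + x) * exp (-x)) (Ioi 0) :=
  ((integrableOn_pow_mul_exp_neg_mul 0 one_pos).add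
    (integrableOn_pow_mul_exp_neg_mul 1 one_pos)).congr_fun
    (fun x _ => by simp only [Pi.add_apply, pow_zero, pow_one, one_mul]; ring) measurableSet_Ioi

lemma integrableOn_log_one_sub_one_add_mul_exp_neg_Ioc :
    IntegrableOn (fun x : ℝ => log (1 - (1 + x) * exp (-x))) (Ioc 0 1) := by
  have hbound : IntegrableOn (fun x : ℝ => (1 + log 2) - 2 * log x) (Ioc 0 1) :=
    (integrableOn_const (C := 1 + log 2) measure_Ioc_lt_top.ne).sub
      (((intervalIntegrable_iff_integrableOn_Ioc_of_le zero_le_one).mp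
        intervalIntegral.intervalIntegrable_log').const_mul 2)
  refine hbound.mono' (Measurable.aestronglyMeasurable (by fun_prop))
    (ae_restrict_of_forall_mem measurableSet_Ioc fun x ⟨hx0, hx1⟩ => ?_)
  have hlow := sq_div_two_mul_exp_neg_le hx0.le
  have hpos : 0 < x ^ 2 / 2 * exp (-x) := by positivity
  have hlog : log (x ^ 2 / 2 * exp (-x)) = 2 * log x - log 2 - x := by
    rw [log_mul (by positivity) (exp_pos _).ne', log_exp, log_div (by positivity) two_ne_zero,
      log_pow]
    push_cast
    ring
  rw [norm_eq_abs, abs_of_nonpos (log_nonpos (hpos.le.trans hlow)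
    (by linarith [one_add_mul_exp_neg_nonneg (x := x) (by linarith)]))]
  linarith [log_le_log hpos hlow]

lemma integrableOn_log_one_sub_one_add_mul_exp_neg_Ioi_one :
    IntegrableOn (fun x : ℝ => log (1 - (1 + x) * exp (-x))) (Ioi 1) := by
  have hbound : IntegrableOn (fun x : ℝ => (1 + x) * exp (-x) / (1 - 4 / 5)) (Ioi 1) :=
    (integrableOn_one_add_mul_exp_neg.mono_set (Ioi_subset_Ioi zero_le_one)).div_const _
  refine hbound.mono' (Measurable.aestronglyMeasurable (by fun_prop))
    (ae_restrict_of_forall_mem measurableSet_Ioi fun x (hx : 1 < x) => ?_)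
  exact abs_log_one_sub_le (one_add_mul_exp_neg_nonneg (by linarith))
    (one_add_mul_exp_neg_le hx.le) (by norm_num)

lemma integrableOn_log_one_sub_one_add_mul_exp_neg :
    IntegrableOn (fun x : ℝ => log (1 - (1 + x) * exp (-x))) (Ioi 0) := by
  rw [← Ioc_union_Ioi_eq_Ioi zero_le_one]
  exact integrableOn_log_one_sub_one_add_mul_exp_neg_Ioc.union
    integrableOn_log_one_sub_one_add_mul_exp_neg_Ioi_one

theorem double_sum_eq_log_integral :
    IntegrableOn (fun x : ℝ => Real.log (1 - (1 + x) * Real.exp (-x))) (Set.Ioi 0) ∧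
    HasSum
      (fun k : ℕ =>
        ∑ i ∈ Finset.range (k + 2),
          ((k + 1).factorial : ℝ) / (i.factorial : ℝ) * ((k : ℝ) + 1) ^ ((i : ℤ) - (k + 1) - 2))
      (-∫ x in Set.Ioi (0:ℝ), Real.log (1 - (1 + x) * Real.exp (-x))) := by
  have hlog := integrableOn_log_one_sub_one_add_mul_exp_neg
  have hseries := hasSum_integral_pow_div_of_integrable_log_one_sub (by fun_prop)
    (ae_restrict_of_forall_mem measurableSet_Ioi fun x (hx : 0 < x) =>
      one_add_mul_exp_neg_nonneg (by linarith))
    (ae_restrict_of_forall_mem measurableSet_Ioi fun x (hx : 0 < x) =>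
      one_add_mul_exp_neg_lt_one hx.ne') hlog
  refine ⟨hlog, hseries.congr_fun fun k => ?_⟩
  have hk := integral_one_add_mul_exp_neg_pow_div k.succ_pos
  push_cast at hk
  exact hk.symm
end

section
/- For integers $m \ge 2$, $j \in \{-1, 0\}$ and $k \ge 100$, the quantity $t_m(k,j) = \sum_{i=0}^{k+j}\bigl(\frac{k+1}{2}+\frac{i-1}{k}\bigr)^m - \sum_{i=0}^{k-1} i^m$ is at most $0$. -/
/-!
The first sum has at most `k + 1` terms, each at most `((k + 3) / 2) ^ m`, while comparing
`∑_{i<k} i ^ m` with `∫₀^{k-1} x ^ m dx` (via the mean value bound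
`(i + 1) ^ (m + 1) - i ^ (m + 1) ≤ (m + 1) (i + 1) ^ m`) gives
`(m + 1) ∑_{i<k} i ^ m ≥ (k - 1) ^ (m + 1)`. Since `(k + 3) / 2` is roughly `(k - 1) / 2`, the
factor `2 ^ m` beats `(m + 1) (k + 1) / (k - 1)` once `m ≥ 2` and `k` is large; the constant
`19 / 10 < 2` splits this into `(m + 1) (k + 1) ≤ (19 / 10) ^ m (k - 1)` and
`19 / 10 · (k + 3) / 2 ≤ k - 1`.
-/

open Finset

lemma pow_succ_sub_pow_le {R : Type*} [CommRing R] [LinearOrder R] [IsStrictOrderedRing R]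
    {a b : R} (hb : 0 ≤ b) (hab : b ≤ a) (n : ℕ) :
    a ^ (n + 1) - b ^ (n + 1) ≤ (a - b) * (n + 1) * a ^ n := by
  have ha : 0 ≤ a := hb.trans hab
  have := abs_pow_sub_pow_le a b (n + 1)
  rwa [abs_of_nonneg (sub_nonneg.2 (pow_le_pow_left₀ hb hab _)), abs_of_nonneg (sub_nonneg.2 hab),
    abs_of_nonneg ha, abs_of_nonneg hb, max_eq_left hab, Nat.add_sub_cancel, Nat.cast_succ] at this

lemma pow_succ_le_mul_sum_range_pow (m n : ℕ) :
    (n : ℝ) ^ (m + 1) ≤ (m + 1) * ∑ i ∈ range (n + 1), (i : ℝ) ^ m := by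
  induction n with
  | zero => rw [Nat.cast_zero, zero_pow m.succ_ne_zero]; positivity
  | succ n ih =>
    have step := pow_succ_sub_pow_le (Nat.cast_nonneg n) (by simp : (n : ℝ) ≤ n + 1) m
    rw [sum_range_succ, mul_add]
    push_cast at step ⊢
    linarith

lemma succ_mul_le_pow_mul {k : ℝ} (hk : 11 ≤ k) {m : ℕ} (hm : 2 ≤ m) :
    (m + 1) * (k + 1) ≤ (19 / 10) ^ m * (k - 1) := by
  induction m, hm using Nat.le_induction with
  | base => norm_num; linarith
  | succ m hm ih =>
    have hm' : (2 : ℝ) ≤ m := by exact_mod_cast hm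
    rw [pow_succ]
    push_cast
    nlinarith

lemma succ_mul_mul_pow_le {k : ℝ} (hk : 77 ≤ k) {m : ℕ} (hm : 2 ≤ m) :
    (m + 1) * ((k + 1) * ((k + 3) / 2) ^ m) ≤ (k - 1) ^ (m + 1) :=
  calc (m + 1) * ((k + 1) * ((k + 3) / 2) ^ m)
      = ((m + 1) * (k + 1)) * ((k + 3) / 2) ^ m := by ring
    _ ≤ ((19 / 10) ^ m * (k - 1)) * ((k + 3) / 2) ^ m :=
        mul_le_mul_of_nonneg_right (succ_mul_le_pow_mul (by linarith) hm) (by positivity)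
    _ = (19 / 10 * ((k + 3) / 2)) ^ m * (k - 1) := by rw [mul_pow]; ring
    _ ≤ (k - 1) ^ m * (k - 1) := by gcongr <;> linarith
    _ = (k - 1) ^ (m + 1) := (pow_succ _ _).symm

lemma sum_range_pow_le {k N : ℕ} (hk : 0 < k) (hN : N ≤ k + 1) (m : ℕ) :
    ∑ i ∈ range N, (((k : ℝ) + 1) / 2 + ((i : ℝ) - 1) / k) ^ m
      ≤ ((k : ℝ) + 1) * (((k : ℝ) + 3) / 2) ^ m := by
  have hk' : (1 : ℝ) ≤ k := by exact_mod_cast hk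
  have term : ∀ i ∈ range N, (((k : ℝ) + 1) / 2 + ((i : ℝ) - 1) / k) ^ m
      ≤ (((k : ℝ) + 3) / 2) ^ m := by
    intro i hi
    have hi : (i : ℝ) ≤ k := by exact_mod_cast Nat.lt_succ_iff.1 ((mem_range.1 hi).trans_le hN)
    have lower : -1 ≤ ((i : ℝ) - 1) / k := by
      rw [le_div_iff₀ (by linarith)]; linarith [(Nat.cast_nonneg i : (0 : ℝ) ≤ i)]
    have upper : ((i : ℝ) - 1) / k ≤ 1 := by rw [div_le_one (by linarith)]; linarith
    exact pow_le_pow_left₀ (by linarith) (by linarith) m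
  calc _ ≤ N • (((k : ℝ) + 3) / 2) ^ m := by simpa using sum_le_card_nsmul _ _ _ term
    _ ≤ ((k : ℝ) + 1) * (((k : ℝ) + 3) / 2) ^ m := by
        rw [nsmul_eq_mul]; gcongr; exact_mod_cast hN

theorem t_m_nonpos (m k : ℕ) (j : ℤ) (hm : 2 ≤ m) (hj : j = -1 ∨ j = 0) (hk : 100 ≤ k) :
    (∑ i ∈ Finset.range (((k : ℤ) + j).toNat + 1),
        (((k : ℝ) + 1) / 2 + ((i : ℝ) - 1) / k) ^ m) - ∑ i ∈ Finset.range k, (i : ℝ) ^ m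
      ≤ 0 := by
  have hN : ((k : ℤ) + j).toNat + 1 ≤ k + 1 := by omega
  have first := sum_range_pow_le (by omega) hN m
  have second : ((k : ℝ) - 1) ^ (m + 1) ≤ (m + 1) * ∑ i ∈ range k, (i : ℝ) ^ m := by
    have := pow_succ_le_mul_sum_range_pow m (k - 1)
    rwa [Nat.sub_add_cancel (by omega), Nat.cast_sub (by omega), Nat.cast_one] at this
  have key := succ_mul_mul_pow_le (k := k) (by exact_mod_cast (by omega : 77 ≤ k)) hm
  have := le_of_mul_le_mul_left (key.trans second) (by positivity)
  linarith
end
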